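/- arXiv:2602.14163 — 2 statements merged into one kernel-verified Lean document; each statement's English description precedes it below -/
import Mathlib

section
/- For n ≥ 7, the minimal monomial generating set of the closed neighborhood ideal NI(P_n^2) ⊆ k[x_1,...,x_n] is {x_1x_2x_3, x_{n-2}x_{n-1}x_n} ∪ {x_i x_{i+1} x_{i+2} x_{i+3} x_{i+4} : 2 ≤ i ≤ n-5}. -/
open MvPolynomial CategoryTheory

noncomputable section

/-- The square of the path graph on `n` vertices: vertices indexed by `Fin n`,
with vertex `i` adjacent to vertex `j` iff `1 ≤ |i - j| ≤ 2`. -/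
def pathSq (n : ℕ) : SimpleGraph (Fin n) where
  Adj i j := i ≠ j ∧ (i : ℕ) ≤ (j : ℕ) + 2 ∧ (j : ℕ) ≤ (i : ℕ) + 2
  symm := by constructor; intro i j h; exact ⟨h.1.symm, h.2.2, h.2.1⟩
  loopless := by constructor; intro i h; exact h.1 rfl

open Classical in
/-- The closed neighborhood `N[i]` of a vertex `i` in `P_n²`, as a finset. -/
def closedNbhd (n : ℕ) (i : Fin n) : Finset (Fin n) :=
  Finset.univ.filter (fun j => j = i ∨ (pathSq n).Adj i j)

/-- The closed neighborhood ideal `NI(P_n²) ⊆ k[x_1,…,x_n]`, generated by the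
monomials `∏_{x_j ∈ N[x_i]} x_j` over all vertices `x_i`. -/
def niIdeal (k : Type*) [Field k] (n : ℕ) : Ideal (MvPolynomial (Fin n) k) :=
  Ideal.span (Set.range fun i : Fin n => ∏ j ∈ closedNbhd n i, X j)

/-- The product `x_{a+1} x_{a+2} ⋯ x_{b+1}` (0-indexed: `∏_{a ≤ j ≤ b} X j`). -/
def prodIcc (k : Type*) [Field k] (n a b : ℕ) : MvPolynomial (Fin n) k :=
  ∏ j ∈ Finset.univ.filter (fun j : Fin n => a ≤ (j : ℕ) ∧ (j : ℕ) ≤ b), X j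

/-- The claimed generating set of `NI(P_n²)` for `n ≥ 7` (with 1-indexed variables):
`x_1x_2x_3`, `x_{n-2}x_{n-1}x_n`, and `x_i x_{i+1} x_{i+2} x_{i+3} x_{i+4}` for `2 ≤ i ≤ n-5`. -/
def niGens (k : Type*) [Field k] (n : ℕ) : Set (MvPolynomial (Fin n) k) :=
  {prodIcc k n 0 2, prodIcc k n (n - 3) (n - 1)} ∪
    {q | ∃ a : ℕ, 1 ≤ a ∧ a ≤ n - 6 ∧ q = prodIcc k n a (a + 4)}

-- auxiliary
def iset (n a b : ℕ) : Finset (Fin n) :=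
  Finset.univ.filter (fun j : Fin n => a ≤ (j : ℕ) ∧ (j : ℕ) ≤ b)

lemma mem_iset {n a b : ℕ} {j : Fin n} : j ∈ iset n a b ↔ a ≤ (j : ℕ) ∧ (j : ℕ) ≤ b := by
  simp [iset]

def Efun (n a b : ℕ) : Fin n →₀ ℕ := ∑ j ∈ iset n a b, Finsupp.single j 1

lemma prodIcc_def (k : Type*) [Field k] (n a b : ℕ) :
    prodIcc k n a b = ∏ j ∈ iset n a b, X j := rfl

lemma prod_X_eq (k : Type*) [Field k] {n : ℕ} (s : Finset (Fin n)) :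
    (∏ j ∈ s, (X j : MvPolynomial (Fin n) k)) = monomial (∑ j ∈ s, Finsupp.single j 1) 1 := by
  induction s using Finset.cons_induction with
  | empty => simp
  | cons a s ha ih => rw [Finset.prod_cons, Finset.sum_cons, ih, X, monomial_mul, one_mul]

lemma prodIcc_eq (k : Type*) [Field k] (n a b : ℕ) :
    prodIcc k n a b = monomial (Efun n a b) 1 := by
  rw [prodIcc_def, prod_X_eq, Efun]

lemma Efun_apply (n a b : ℕ) (j : Fin n) :
    Efun n a b j = if a ≤ (j : ℕ) ∧ (j : ℕ) ≤ b then 1 else 0 := by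
  classical
  rw [Efun, Finsupp.finset_sum_apply]
  simp only [Finsupp.single_apply]
  rw [Finset.sum_ite_eq' (iset n a b) j (fun _ => 1)]
  by_cases h : a ≤ (j : ℕ) ∧ (j : ℕ) ≤ b
  · rw [if_pos (mem_iset.mpr h), if_pos h]
  · rw [if_neg (fun hh => h (mem_iset.mp hh)), if_neg h]

lemma Efun_mono {n a b c d v : ℕ} (h : Efun n a b ≤ Efun n c d) (hv : v < n)
    (h1 : a ≤ v) (h2 : v ≤ b) : c ≤ v ∧ v ≤ d := by
  have hh := Finsupp.le_def.mp h ⟨v, hv⟩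
  rw [Efun_apply, Efun_apply] at hh
  simp only [Fin.val_mk] at hh
  rw [if_pos ⟨h1, h2⟩] at hh
  by_contra hc
  rw [if_neg hc] at hh
  omega

lemma closedNbhd_eq (n : ℕ) (i : Fin n) :
    closedNbhd n i = iset n ((i : ℕ) - 2) ((i : ℕ) + 2) := by
  ext j
  simp only [closedNbhd, iset, Finset.mem_filter, Finset.mem_univ, true_and, pathSq,
    ne_eq, Fin.ext_iff]
  omega

lemma prodIcc_mem_span (k : Type*) [Field k] {n : ℕ} {S : Set (MvPolynomial (Fin n) k)}
    {a b c d : ℕ} (hsub : ∀ v : ℕ, v < n → c ≤ v → v ≤ d → a ≤ v ∧ v ≤ b)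
    (hmem : prodIcc k n c d ∈ S) : prodIcc k n a b ∈ Ideal.span S := by
  have hs : iset n c d ⊆ iset n a b := by
    intro j hj
    rw [mem_iset] at hj ⊢
    exact hsub j j.isLt hj.1 hj.2
  have heq : prodIcc k n a b = (∏ j ∈ iset n a b \ iset n c d, X j) * prodIcc k n c d := by
    rw [prodIcc_def, prodIcc_def, Finset.prod_sdiff hs]
  rw [heq]
  exact Ideal.mul_mem_left _ _ (Ideal.subset_span hmem)

def allE (n : ℕ) : Set (Fin n →₀ ℕ) :=
  {Efun n 0 2, Efun n (n - 3) (n - 1)} ∪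
    {s | ∃ a : ℕ, 1 ≤ a ∧ a ≤ n - 6 ∧ s = Efun n a (a + 4)}

lemma allE_le {n : ℕ} (hn : 7 ≤ n) {s t : Fin n →₀ ℕ}
    (hs : s ∈ allE n) (ht : t ∈ allE n) (hle : s ≤ t) : s = t := by
  rcases hs with (rfl | rfl) | ⟨a, ha1, ha2, rfl⟩ <;>
    rcases ht with (rfl | rfl) | ⟨b, hb1, hb2, rfl⟩
  · rfl
  · exact absurd (Efun_mono hle (by omega) (by omega) (by omega) : n - 3 ≤ 0 ∧ _) (by omega)
  · exact absurd (Efun_mono hle (by omega) (by omega) (by omega) : b ≤ 0 ∧ _) (by omega)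
  · exact absurd (Efun_mono hle (show n - 1 < n by omega) (by omega) (by omega)) (by omega)
  · rfl
  · exact absurd (Efun_mono hle (show n - 1 < n by omega) (by omega) (by omega)) (by omega)
  · exact absurd (Efun_mono hle (show a + 4 < n by omega) (by omega) (by omega)) (by omega)
  · exact absurd (Efun_mono hle (show a < n by omega) (by omega) (by omega)) (by omega)
  · have h1 := Efun_mono hle (show a < n by omega) (by omega) (by omega)
    have h2 := Efun_mono hle (show a + 4 < n by omega) (by omega) (by omega)
    have : a = b := by omega
    rw [this]

/-- For `n ≥ 7`, the set `{x_1x_2x_3, x_{n-2}x_{n-1}x_n} ∪ {x_i⋯x_{i+4} : 2 ≤ i ≤ n-5}`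
is a minimal monomial generating set of `NI(P_n²)`. -/
theorem niIdeal_minimal_generators (k : Type*) [Field k] (n : ℕ) (hn : 7 ≤ n) :
    niIdeal k n = Ideal.span (niGens k n) ∧
      ∀ m ∈ niGens k n, m ∉ Ideal.span (niGens k n \ {m}) := by
  constructor
  · apply le_antisymm
    · rw [niIdeal, Ideal.span_le]
      rintro _ ⟨i, rfl⟩
      have hi := i.isLt
      dsimp only
      rw [show (∏ j ∈ closedNbhd n i, X j : MvPolynomial (Fin n) k)
          = prodIcc k n ((i : ℕ) - 2) ((i : ℕ) + 2) by rw [prodIcc_def, closedNbhd_eq]]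
      rcases lt_or_ge (i : ℕ) 3 with h | h
      · exact prodIcc_mem_span k (fun v hv h1 h2 => by omega)
          (Or.inl (Or.inl rfl))
      rcases lt_or_ge (i : ℕ) (n - 3) with h' | h'
      · exact prodIcc_mem_span k (fun v hv h1 h2 => by omega)
          (Or.inr ⟨(i : ℕ) - 2, by omega, by omega, rfl⟩)
      · exact prodIcc_mem_span k (fun v hv h1 h2 => by omega)
          (Or.inl (Or.inr rfl))
    · rw [Ideal.span_le]
      rintro q ((rfl | rfl) | ⟨a, ha1, ha2, rfl⟩)
      · apply Ideal.subset_span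
        refine ⟨⟨0, by omega⟩, ?_⟩
        dsimp only
        rw [prodIcc_def, closedNbhd_eq]
        norm_num
      · apply Ideal.subset_span
        refine ⟨⟨n - 1, by omega⟩, ?_⟩
        dsimp only
        rw [prodIcc_def, closedNbhd_eq]
        congr 1
        ext j
        rw [mem_iset, mem_iset]
        have := j.isLt
        constructor <;> intro hj <;> constructor <;> simp only [Fin.val_mk] at * <;> omega
      · apply Ideal.subset_span
        refine ⟨⟨a + 2, by omega⟩, ?_⟩
        dsimp only
        rw [prodIcc_def, closedNbhd_eq]
        congr 1
  · intro m hm hmem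
    -- m = monomial sm 1 with sm ∈ allE n
    obtain ⟨sm, hsmE, hmeq⟩ : ∃ sm ∈ allE n, m = monomial sm 1 := by
      rcases hm with (rfl | rfl) | ⟨a, ha1, ha2, rfl⟩
      · exact ⟨_, Or.inl (Or.inl rfl), prodIcc_eq k n 0 2⟩
      · exact ⟨_, Or.inl (Or.inr rfl), prodIcc_eq k n _ _⟩
      · exact ⟨_, Or.inr ⟨a, ha1, ha2, rfl⟩, prodIcc_eq k n _ _⟩
    have hsub : niGens k n \ {m} ⊆
        (fun s => monomial s (1 : k)) '' {s | s ∈ allE n ∧ s ≠ sm} := by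
      rintro q ⟨hq, hq2⟩
      obtain ⟨s, hsE, rfl⟩ : ∃ s ∈ allE n, q = monomial s 1 := by
        rcases hq with (rfl | rfl) | ⟨a, ha1, ha2, rfl⟩
        · exact ⟨_, Or.inl (Or.inl rfl), prodIcc_eq k n 0 2⟩
        · exact ⟨_, Or.inl (Or.inr rfl), prodIcc_eq k n _ _⟩
        · exact ⟨_, Or.inr ⟨a, ha1, ha2, rfl⟩, prodIcc_eq k n _ _⟩
      refine ⟨s, ⟨hsE, fun h => ?_⟩, rfl⟩
      apply hq2
      rw [Set.mem_singleton_iff, hmeq, h]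
    have hmem2 := Ideal.span_mono hsub hmem
    rw [mem_ideal_span_monomial_image] at hmem2
    have hsm : sm ∈ m.support := by
      classical
      rw [hmeq, support_monomial, if_neg (one_ne_zero)]
      exact Finset.mem_singleton_self sm
    obtain ⟨s, ⟨hsE, hne⟩, hle⟩ := hmem2 sm hsm
    exact hne (allE_le hn hsE hsmE hle)

end
end

section
/- For n ≥ 7 with n = 6p + d (0 ≤ d ≤ 5), the maximal size γ'(P_n^2) of a minimal dominating set of P_n^2 equals 2p if d = 0, 2p+1 if d ∈ {1,2,3}, and 2p+2 if d ∈ {4,5}. -/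
open MvPolynomial CategoryTheory

noncomputable section

/-- `M` is a dominating set of `G`: every vertex is in `M` or adjacent to a vertex of `M`. -/
def IsDominatingSet {V : Type*} (G : SimpleGraph V) (M : Finset V) : Prop :=
  ∀ v, v ∈ M ∨ ∃ u ∈ M, G.Adj u v

/-- `M` is a minimal dominating set: it is dominating and no proper subset is. -/
def IsMinimalDominatingSet {V : Type*} (G : SimpleGraph V) (M : Finset V) : Prop :=
  IsDominatingSet G M ∧ ∀ M' ⊂ M, ¬IsDominatingSet G M'

/-- `γ'(G)`: the maximum size of a minimal dominating set of `G`. -/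
def upperDominationNumber {V : Type*} (G : SimpleGraph V) : ℕ :=
  sSup {r | ∃ M : Finset V, IsMinimalDominatingSet G M ∧ M.card = r}

/-- The set of multiples of 3 in `Fin n`. -/
def tripleSet (n : ℕ) : Finset (Fin n) :=
  Finset.univ.filter (fun v : Fin n => (v : ℕ) % 3 = 0)

lemma mem_tripleSet {n : ℕ} (v : Fin n) : v ∈ tripleSet n ↔ (v : ℕ) % 3 = 0 := by
  simp [tripleSet]

lemma tripleSet_card {n : ℕ} : (tripleSet n).card = (n + 2) / 3 := by
  rw [← Finset.card_range ((n + 2) / 3)]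
  apply Finset.card_bij' (fun (v : Fin n) _ => (v : ℕ) / 3)
    (fun k hk => (⟨3 * k, by simp only [Finset.mem_range] at hk; omega⟩ : Fin n))
  case hi =>
    intro v hv
    simp only [tripleSet, Finset.mem_filter] at hv
    have := v.isLt
    simp only [Finset.mem_range]
    omega
  case hj =>
    intro k hk
    simp only [Finset.mem_range] at hk
    simp only [tripleSet, Finset.mem_filter, Finset.mem_univ, true_and]
    omega
  case left_inv =>
    intro v hv
    simp only [tripleSet, Finset.mem_filter] at hv
    apply Fin.ext
    simp only
    omega
  case right_inv =>
    intro k hk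
    simp only [Finset.mem_range] at hk
    simp only
    omega

lemma tripleSet_minimal {n : ℕ} : IsMinimalDominatingSet (pathSq n) (tripleSet n) := by
  constructor
  · intro v
    by_cases h : (v : ℕ) % 3 = 0
    · exact Or.inl ((mem_tripleSet v).2 h)
    · right
      have hv := v.isLt
      refine ⟨⟨3 * ((v : ℕ) / 3), by omega⟩,
        (mem_tripleSet _).2 (by show 3 * ((v : ℕ) / 3) % 3 = 0; omega), ?_⟩
      refine ⟨?_, by show 3 * ((v : ℕ) / 3) ≤ (v : ℕ) + 2; omega,
        by show (v : ℕ) ≤ 3 * ((v : ℕ) / 3) + 2; omega⟩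
      intro heq
      apply h
      have : (3 * ((v : ℕ) / 3)) = (v : ℕ) := congrArg Fin.val heq
      omega
  · intro M' hss hdom
    obtain ⟨u, huM, huM'⟩ := Finset.exists_of_ssubset hss
    rcases hdom u with h | ⟨w, hwM', hadj⟩
    · exact huM' h
    · have hwM := hss.1 hwM'
      rw [mem_tripleSet] at hwM huM
      obtain ⟨hne, h1, h2⟩ := hadj
      have : (w : ℕ) ≠ (u : ℕ) := fun h => hne (Fin.ext h)
      omega

/-- Every member of a minimal dominating set of `pathSq n` has a private neighbor. -/
lemma private_neighbor {n : ℕ} {M : Finset (Fin n)}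
    (hM : IsMinimalDominatingSet (pathSq n) M) {u : Fin n} (hu : u ∈ M) :
    ∃ v : Fin n, ((u : ℕ) ≤ (v : ℕ) + 2 ∧ (v : ℕ) ≤ (u : ℕ) + 2) ∧
      ∀ w ∈ M, ((w : ℕ) ≤ (v : ℕ) + 2 ∧ (v : ℕ) ≤ (w : ℕ) + 2) → w = u := by
  obtain ⟨hdom, hmin⟩ := hM
  have hnd := hmin _ (Finset.erase_ssubset hu)
  rw [IsDominatingSet] at hnd
  push_neg at hnd
  obtain ⟨v, hv1, hv2⟩ := hnd
  by_cases hvM : v ∈ M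
  · have hvu : v = u := by
      by_contra h
      exact hv1 (Finset.mem_erase.2 ⟨h, hvM⟩)
    subst hvu
    refine ⟨v, ⟨by omega, by omega⟩, ?_⟩
    intro w hw hb
    by_contra hne
    exact hv2 w (Finset.mem_erase.2 ⟨hne, hw⟩) ⟨hne, hb.1, hb.2⟩
  · rcases hdom v with h | ⟨w, hwM, hadj⟩
    · exact absurd h hvM
    · have hwu : w = u := by
        by_contra h
        exact hv2 w (Finset.mem_erase.2 ⟨h, hwM⟩) hadj
      subst hwu
      refine ⟨v, ⟨hadj.2.1, hadj.2.2⟩, ?_⟩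
      intro x hx hb
      by_contra hne
      have hxv : x ≠ v := fun h => hvM (h ▸ hx)
      exact hv2 x (Finset.mem_erase.2 ⟨hne, hx⟩) ⟨hxv, hb.1, hb.2⟩

/-- Fact B: the second smallest element of a minimal dominating set is ≥ 3. -/
lemma factB {n : ℕ} {M : Finset (Fin n)} (hM : IsMinimalDominatingSet (pathSq n) M)
    {a b : Fin n} (ha : a ∈ M) (hb : b ∈ M) (hab : (a : ℕ) < (b : ℕ)) : 3 ≤ (b : ℕ) := by
  obtain ⟨v, ⟨h1, h2⟩, hpriv⟩ := private_neighbor hM ha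
  have hba : ¬((b : ℕ) ≤ (v : ℕ) + 2 ∧ (v : ℕ) ≤ (b : ℕ) + 2) := by
    intro h
    exact absurd (Fin.ext_iff.1 (hpriv b hb h)) (by omega)
  omega

/-- Fact A: any three elements of a minimal dominating set span at least 6. -/
lemma factA {n : ℕ} {M : Finset (Fin n)} (hM : IsMinimalDominatingSet (pathSq n) M)
    {a b c : Fin n} (ha : a ∈ M) (hb : b ∈ M) (hc : c ∈ M)
    (hab : (a : ℕ) < (b : ℕ)) (hbc : (b : ℕ) < (c : ℕ)) : (a : ℕ) + 6 ≤ (c : ℕ) := by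
  obtain ⟨v, ⟨h1, h2⟩, hpriv⟩ := private_neighbor hM hb
  have hha : ¬((a : ℕ) ≤ (v : ℕ) + 2 ∧ (v : ℕ) ≤ (a : ℕ) + 2) := by
    intro h
    exact absurd (Fin.ext_iff.1 (hpriv a ha h)) (by omega)
  have hhc : ¬((c : ℕ) ≤ (v : ℕ) + 2 ∧ (v : ℕ) ≤ (c : ℕ) + 2) := by
    intro h
    exact absurd (Fin.ext_iff.1 (hpriv c hc h)) (by omega)
  omega

/-- Upper bound: any minimal dominating set of `pathSq n` (for `n ≥ 7`) has
`3 * card ≤ n + 2`. -/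
lemma card_minimal_le {n : ℕ} (hn : 7 ≤ n) {M : Finset (Fin n)}
    (hM : IsMinimalDominatingSet (pathSq n) M) : 3 * M.card ≤ n + 2 := by
  set l := M.sort (· ≤ ·) with hl
  have hlen : l.length = M.card := Finset.length_sort _
  have hsorted : l.Pairwise (· < ·) := (Finset.sortedLT_sort M).pairwise
  have hmem : ∀ (i : ℕ) (h : i < l.length), l.get ⟨i, h⟩ ∈ M := by
    intro i h
    rw [← Finset.mem_sort (α := Fin n) (· ≤ ·)]
    exact l.get_mem _
  have hmono : ∀ (i j : ℕ) (hi : i < l.length) (hj : j < l.length), i < j →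
      (l.get ⟨i, hi⟩ : ℕ) < (l.get ⟨j, hj⟩ : ℕ) := by
    intro i j hi hj hij
    exact hsorted.sortedLT.strictMono_get (by exact hij)
  -- key chain inequality
  have key : ∀ (i : ℕ) (h : i < l.length), 1 ≤ i → 3 * i ≤ (l.get ⟨i, h⟩ : ℕ) := by
    intro i
    induction i using Nat.strong_induction_on with
    | _ i ih =>
      intro h h1
      match i, h1 with
      | 1, _ =>
        have := factB hM (hmem 0 (by omega)) (hmem 1 h) (hmono 0 1 (by omega) h (by omega))
        omega
      | 2, _ =>
        have := factA hM (hmem 0 (by omega)) (hmem 1 (by omega)) (hmem 2 h)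
          (hmono 0 1 (by omega) (by omega) (by omega)) (hmono 1 2 (by omega) h (by omega))
        omega
      | (k+3), _ =>
        have h1' : k + 1 < l.length := by omega
        have h2' : k + 2 < l.length := by omega
        have hA := factA hM (hmem (k+1) h1') (hmem (k+2) h2') (hmem (k+3) h)
          (hmono (k+1) (k+2) h1' h2' (by omega)) (hmono (k+2) (k+3) h2' h (by omega))
        have hIH := ih (k+1) (by omega) h1' (by omega)
        omega
  rcases Nat.lt_or_ge M.card 2 with hm | hm
  · omega
  · have hlast : M.card - 1 < l.length := by omega
    have h1 := key (M.card - 1) hlast (by omega)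
    have h2 := (l.get ⟨M.card - 1, hlast⟩).isLt
    omega
/-- For `n ≥ 7` with `n = 6p + d`, `0 ≤ d ≤ 5`, the maximal size of a minimal
dominating set of `P_n²` is `2p` if `d = 0`, `2p+1` if `d ∈ {1,2,3}`, and `2p+2`
if `d ∈ {4,5}`. -/
theorem upperDominationNumber_pathSq (n p d : ℕ) (hn : 7 ≤ n) (hd : d ≤ 5)
    (hnpd : n = 6 * p + d) :
    upperDominationNumber (pathSq n) =
      (if d = 0 then 2 * p else if d ≤ 3 then 2 * p + 1 else 2 * p + 2) := by
  have ht : (if d = 0 then 2 * p else if d ≤ 3 then 2 * p + 1 else 2 * p + 2) = (n + 2) / 3 := by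
    split_ifs <;> omega
  rw [ht]
  have hmemS : (n + 2) / 3 ∈ {r | ∃ M : Finset (Fin n), IsMinimalDominatingSet (pathSq n) M ∧ M.card = r} :=
    ⟨tripleSet n, tripleSet_minimal, tripleSet_card⟩
  have hub : ∀ r ∈ {r | ∃ M : Finset (Fin n), IsMinimalDominatingSet (pathSq n) M ∧ M.card = r},
      r ≤ (n + 2) / 3 := by
    rintro r ⟨M, hM, rfl⟩
    have := card_minimal_le hn hM
    omega
  exact le_antisymm (csSup_le ⟨_, hmemS⟩ hub) (le_csSup ⟨(n + 2) / 3, hub⟩ hmemS)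

end
end
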